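/- arXiv:1001.0136 — 4 statements merged into one kernel-verified Lean document; each statement's English description precedes it below -/
import Mathlib

section
/- Let G be a threshold graph with self-loops with block sizes k_1,…,k_m, l_1,…,l_m, where additionally k_1 ≥ 1. Set J = 2m−1 and let B̃ be the loop-reduced matrix built from the sequence (a_1,…,a_J) = (k_m, l_{m−1}, k_{m−1}, l_{m−2}, …, l_1, k_1). Then the characteristic polynomial of the adjacency matrix Ã_G equals x^{n − J} · det(x·I_J − B̃), and 0 is not an eigenvalue of B̃. In particular, the eigenvalue 0 of Ã_G has algebraic multiplicity exactly n − (2m−1). -/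
open Finset Polynomial

/-- The adjacency matrix of a threshold graph *with self-loops* determined by a block
assignment `b : Fin n → ℕ × Bool`, where `b u = (i, true)` means `u ∈ V_i^{(1)}` and
`b u = (i, false)` means `u ∈ V_i^{(0)}`.  Two (not necessarily distinct) vertices `u, v`
are adjacent iff (after possibly swapping them) `u` lies in some `V_i^{(1)}` and `v` lies
in some `V_j^{(1)}`, or in some `V_j^{(0)}` with `j < i`; in particular every vertex of a
`V^{(1)}` block carries a self-loop. -/
def thrAdjLoop {n : ℕ} (b : Fin n → ℕ × Bool) : Matrix (Fin n) (Fin n) ℝ :=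
  Matrix.of fun u v =>
    if (((b u).2 = true ∧ ((b v).2 = true ∨ ((b v).2 = false ∧ (b v).1 < (b u).1))) ∨
         ((b v).2 = true ∧ ((b u).2 = true ∨ ((b u).2 = false ∧ (b u).1 < (b v).1))))
    then (1 : ℝ) else 0

/-- The loop-reduced matrix built from a sequence `a_1, …, a_J` (0-indexed here):
`B̃[i,j] = a_j` if (`j` is odd and `j ≤ i`) or (`i` is odd and `i ≤ j`) in 1-based
indexing, and `B̃[i,j] = 0` otherwise. -/
def loopReducedMatrix {J : ℕ} (a : Fin J → ℝ) : Matrix (Fin J) (Fin J) ℝ :=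
  Matrix.of fun i j =>
    if ((j : ℕ) % 2 = 0 ∧ (j : ℕ) ≤ (i : ℕ)) ∨ ((i : ℕ) % 2 = 0 ∧ (i : ℕ) ≤ (j : ℕ))
    then a j else 0

/-- The sequence `(a_1, …, a_J) = (k_m, l_{m-1}, k_{m-1}, l_{m-2}, …)` (1-based),
written 0-indexed: `a j = k (m - j/2)` for even `j` and `a j = l (m - (j+1)/2)` for odd `j`. -/
def aseq (m : ℕ) (k l : ℕ → ℕ) (J : ℕ) : Fin J → ℝ :=
  fun j => if (j : ℕ) % 2 = 0 then (k (m - (j : ℕ) / 2) : ℝ) else (l (m - ((j : ℕ) + 1) / 2) : ℝ)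

/-!
List the blocks as `t_0, …, t_{J-1} = V_m^{(1)}, V_{m-1}^{(0)}, V_{m-1}^{(1)}, …, V_1^{(1)}`; the
one block left out, `V_m^{(0)}`, consists of isolated vertices. Hence `Ã_G = C D`, where `C` is the
`n × J` block-membership matrix and `D j v = Ã(t_j, v)`. Adjacency between `t_i` and `t_j` is
exactly the pattern of nonzero entries of `B̃`, and the column of `t_j` is counted `|t_j| = a_j`
times, so `D C = B̃`; then `x^J χ(C D) = x^n χ(D C)` gives the factorization. Finally
`B̃ = P · diag(a)`, where the 0/1 pattern `P` has an explicit tridiagonal inverse and every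
`a_j ≥ 1`, so `det B̃ ≠ 0`.
-/

open Matrix

section BlockQuotient

variable {ι κ β R : Type*} [DecidableEq β]

def blockIndicator [Zero R] [One R] (b : ι → β) (t : κ → β) : Matrix ι κ R :=
  of fun u j => if b u = t j then 1 else 0

def blockQuotient [Fintype ι] [Semiring R] (f : β → β → R) (b : ι → β) (t : κ → β) :
    Matrix κ κ R :=
  of fun i j => f (t i) (t j) * #{v | b v = t j}

theorem of_comp_eq_blockIndicator_mul [Fintype κ] [Semiring R] (f : β → β → R) (b : ι → β)
    {t : κ → β} (ht : Function.Injective t) (hf : ∀ u v, b u ∉ Set.range t → f (b u) (b v) = 0) :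
    of (fun u v => f (b u) (b v)) =
      (blockIndicator b t : Matrix ι κ R) * of fun j v => f (t j) (b v) := by
  ext u v
  simp only [of_apply, mul_apply, blockIndicator, ite_mul, one_mul, zero_mul]
  by_cases hu : b u ∈ Set.range t
  · obtain ⟨j, hj⟩ := hu
    rw [← hj, sum_eq_single j (fun i _ hi => if_neg fun h => hi (ht h).symm) (by simp),
      if_pos rfl]
  · rw [hf u v hu, sum_eq_zero fun j _ => if_neg fun h => hu ⟨j, h.symm⟩]

theorem of_comp_mul_blockIndicator [Fintype ι] [Semiring R] (f : β → β → R) (b : ι → β)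
    (t : κ → β) :
    (of fun j v => f (t j) (b v)) * (blockIndicator b t : Matrix ι κ R) = blockQuotient f b t := by
  ext i j
  simp only [mul_apply, of_apply, blockIndicator, blockQuotient, mul_ite, mul_one, mul_zero]
  rw [← sum_filter, sum_congr rfl fun v hv => by rw [(mem_filter.1 hv).2],
    sum_const, nsmul_eq_mul']

theorem charpoly_of_comp_eq_X_pow_mul [Fintype ι] [Fintype κ] [DecidableEq ι] [DecidableEq κ]
    [CommRing R] (f : β → β → R) (b : ι → β) {t : κ → β} (ht : Function.Injective t)
    (hne : ∀ j, ∃ u, b u = t j)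
    (hf : ∀ u v, b u ∉ Set.range t → f (b u) (b v) = 0) :
    (of fun u v => f (b u) (b v)).charpoly =
      X ^ (Fintype.card ι - Fintype.card κ) * (blockQuotient f b t).charpoly := by
  choose s hs using hne
  have hs_inj : Function.Injective s := fun i j h => ht (by rw [← hs i, ← hs j, h])
  rw [of_comp_eq_blockIndicator_mul f b ht hf,
    charpoly_mul_comm_of_le _ _ (Fintype.card_le_of_injective s hs_inj),
    of_comp_mul_blockIndicator]

end BlockQuotient

theorem Matrix.isRoot_charpoly_zero_iff {n R : Type*} [Fintype n] [DecidableEq n] [CommRing R]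
    (A : Matrix n n R) : A.charpoly.IsRoot 0 ↔ A.det = 0 := by
  rw [det_eq_sign_charpoly_coeff, coeff_zero_eq_eval_zero, IsRoot.def,
    (isUnit_neg_one.pow _).mul_right_eq_zero]

theorem Polynomial.rootMultiplicity_zero_X_pow_mul {R : Type*} [CommRing R] {p : R[X]}
    (hp : ¬ p.IsRoot 0) (k : ℕ) : (X ^ k * p).rootMultiplicity 0 = k := by
  have hp0 : p ≠ 0 := by rintro rfl; simp at hp
  rw [mul_comm, ← sub_zero X, ← C_0, rootMultiplicity_mul_X_sub_C_pow hp0,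
    rootMultiplicity_eq_zero hp, zero_add]

section LoopPattern

def loopPatternEntry (i j : ℕ) : ℝ :=
  if (j % 2 = 0 ∧ j ≤ i) ∨ (i % 2 = 0 ∧ i ≤ j) then 1 else 0

def loopPattern (J : ℕ) : Matrix (Fin J) (Fin J) ℝ :=
  of fun i j => loopPatternEntry i j

/-- Rows `i - 1` and `i + 1` of the pattern differ exactly in column `i`, so row `i` of the
inverse is `±(e_{i+1} - e_{i-1})`, with `e_{J-1}` in place of `e_J` and `e_{-1} = 0`. -/
def loopPatternInv (J : ℕ) : Matrix (Fin J) (Fin J) ℝ :=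
  of fun i t => (-1) ^ (i : ℕ) *
    ((if (t : ℕ) = min ((i : ℕ) + 1) (J - 1) then 1 else 0) -
      if 1 ≤ (i : ℕ) ∧ (t : ℕ) = i - 1 then 1 else 0)

theorem neg_one_pow_mul_loopPatternEntry_sub_eq_ite {J i j : ℕ} (hi : i < J) (hj : j < J) :
    (-1) ^ i * (loopPatternEntry (min (i + 1) (J - 1)) j -
      if 1 ≤ i then loopPatternEntry (i - 1) j else 0) = if i = j then 1 else 0 := by
  rcases Nat.even_or_odd i with hev | hodd
  · rw [hev.neg_one_pow, one_mul]
    rw [Nat.even_iff] at hev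
    unfold loopPatternEntry
    split_ifs <;> first | omega | norm_num
  · rw [hodd.neg_one_pow]
    rw [Nat.odd_iff] at hodd
    unfold loopPatternEntry
    split_ifs <;> first | omega | norm_num

theorem loopPatternInv_mul_loopPattern (J : ℕ) : loopPatternInv J * loopPattern J = 1 := by
  ext i j
  have hi := i.isLt
  rw [mul_apply, one_apply]
  simp_rw [← Fin.val_inj]
  rw [← neg_one_pow_mul_loopPatternEntry_sub_eq_ite hi j.isLt]
  simp only [loopPatternInv, loopPattern, of_apply]
  rw [Fin.sum_univ_eq_sum_range fun t => (-1) ^ (i : ℕ) *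
    ((if t = min ((i : ℕ) + 1) (J - 1) then 1 else 0) - if 1 ≤ (i : ℕ) ∧ t = i - 1 then 1 else 0) *
      loopPatternEntry t j]
  simp only [mul_assoc, ← mul_sum, sub_mul, sum_sub_distrib, ite_mul, one_mul, zero_mul, ite_and,
    sum_ite_eq', mem_range]
  rw [if_pos (by omega)]
  split_ifs
  · rw [sum_ite_eq', if_pos (mem_range.2 (by omega))]
  · rw [sum_const_zero]

theorem loopReducedMatrix_eq_loopPattern_mul_diagonal {J : ℕ} (a : Fin J → ℝ) :
    loopReducedMatrix a = loopPattern J * diagonal a := by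
  ext i j
  rw [mul_diagonal, loopReducedMatrix, loopPattern, of_apply, of_apply, loopPatternEntry, ite_mul,
    one_mul, zero_mul]

theorem det_loopReducedMatrix_ne_zero {J : ℕ} {a : Fin J → ℝ} (ha : ∀ j, a j ≠ 0) :
    (loopReducedMatrix a).det ≠ 0 := by
  rw [loopReducedMatrix_eq_loopPattern_mul_diagonal, det_mul, det_diagonal]
  exact mul_ne_zero (det_ne_zero_of_left_inverse (loopPatternInv_mul_loopPattern J))
    (prod_ne_zero_iff.2 fun j _ => ha j)

end LoopPattern

section ThresholdGraph

/-- The blocks `V_m^{(1)}, V_{m-1}^{(0)}, V_{m-1}^{(1)}, …, V_1^{(0)}, V_1^{(1)}`, in the order of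
`aseq`. -/
def loopBlock (m j : ℕ) : ℕ × Bool :=
  if j % 2 = 0 then (m - j / 2, true) else (m - (j + 1) / 2, false)

def thrAdj (p q : ℕ × Bool) : ℝ :=
  if (p.2 = true ∧ (q.2 = true ∨ (q.2 = false ∧ q.1 < p.1))) ∨
      (q.2 = true ∧ (p.2 = true ∨ (p.2 = false ∧ p.1 < q.1))) then 1 else 0

theorem thrAdjLoop_eq_of {n : ℕ} (b : Fin n → ℕ × Bool) :
    thrAdjLoop b = of fun u v => thrAdj (b u) (b v) := rfl

theorem loopBlock_injective (m : ℕ) :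
    Function.Injective fun j : Fin (2 * m - 1) => loopBlock m j := by
  intro i j h
  have hi := i.isLt
  have hj := j.isLt
  simp only [loopBlock] at h
  ext
  split_ifs at h <;> simp only [Prod.mk.injEq, reduceCtorEq, and_false, and_true] at h <;> omega

theorem thrAdj_loopBlock {m j : ℕ} (i : ℕ) (hj : j < 2 * m - 1) :
    thrAdj (loopBlock m i) (loopBlock m j) = loopPatternEntry i j := by
  unfold thrAdj loopBlock loopPatternEntry
  split_ifs <;> simp_all <;> omega

theorem thrAdj_eq_zero_of_notMem_range {m : ℕ} {p q : ℕ × Bool} (hp : p.1 ∈ Icc 1 m)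
    (hq : q.1 ≤ m) (h : p ∉ Set.range fun j : Fin (2 * m - 1) => loopBlock m j) :
    thrAdj p q = 0 := by
  obtain ⟨i, _ | _⟩ := p <;> simp only [mem_Icc] at hp
  · obtain rfl | hi : i = m ∨ i < m := by omega
    · simp [thrAdj, not_lt.2 hq]
    · refine absurd ⟨⟨2 * (m - i) - 1, by omega⟩, ?_⟩ h
      simp only [loopBlock, if_neg (show (2 * (m - i) - 1) % 2 ≠ 0 by omega), Prod.mk.injEq,
        and_true]
      omega
  · refine absurd ⟨⟨2 * (m - i), by omega⟩, ?_⟩ h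
    simp only [loopBlock, if_pos (show 2 * (m - i) % 2 = 0 by omega), Prod.mk.injEq, and_true]
    omega

theorem aseq_eq_card {m n : ℕ} {k l : ℕ → ℕ} {b : Fin n → ℕ × Bool}
    (hcard1 : ∀ i ∈ Icc 1 m, #{v | b v = (i, true)} = k i)
    (hcard0 : ∀ i ∈ Icc 1 m, #{v | b v = (i, false)} = l i) (j : Fin (2 * m - 1)) :
    aseq m k l (2 * m - 1) j = #{v | b v = loopBlock m j} := by
  have hj := j.isLt
  unfold aseq loopBlock
  split_ifs
  · rw [hcard1 _ (mem_Icc.2 ⟨by omega, by omega⟩)]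
  · rw [hcard0 _ (mem_Icc.2 ⟨by omega, by omega⟩)]

theorem aseq_pos {m : ℕ} {k l : ℕ → ℕ} (hk : ∀ i, 2 ≤ i → i ≤ m → 1 ≤ k i)
    (hl : ∀ i, 1 ≤ i → i + 1 ≤ m → 1 ≤ l i) (hk1 : 1 ≤ k 1) (j : Fin (2 * m - 1)) :
    0 < aseq m k l (2 * m - 1) j := by
  have hj := j.isLt
  unfold aseq
  split_ifs
  · obtain h | h : m - j / 2 = 1 ∨ 2 ≤ m - j / 2 := by omega
    · rw [h]
      exact_mod_cast hk1
    · exact_mod_cast hk _ h (by omega)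
  · exact_mod_cast hl _ (by omega) (by omega)

theorem loopReducedMatrix_aseq_eq_blockQuotient {m n : ℕ} {k l : ℕ → ℕ} {b : Fin n → ℕ × Bool}
    (hcard1 : ∀ i ∈ Icc 1 m, #{v | b v = (i, true)} = k i)
    (hcard0 : ∀ i ∈ Icc 1 m, #{v | b v = (i, false)} = l i) :
    loopReducedMatrix (aseq m k l (2 * m - 1)) =
      blockQuotient thrAdj b fun j : Fin (2 * m - 1) => loopBlock m j := by
  ext i j
  rw [loopReducedMatrix_eq_loopPattern_mul_diagonal, mul_diagonal, blockQuotient, of_apply,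
    loopPattern, of_apply, thrAdj_loopBlock i j.isLt, aseq_eq_card hcard1 hcard0]

end ThresholdGraph

theorem thresholdGraphLoops_charpoly_factorization_general
    (m n : ℕ) (k l : ℕ → ℕ)
    (hk : ∀ i, 2 ≤ i → i ≤ m → 1 ≤ k i)
    (hl : ∀ i, 1 ≤ i → i + 1 ≤ m → 1 ≤ l i)
    (hk1 : 1 ≤ k 1)
    (b : Fin n → ℕ × Bool)
    (hb : ∀ v, (b v).1 ∈ Finset.Icc 1 m)
    (hcard1 : ∀ i ∈ Finset.Icc 1 m,
      (Finset.univ.filter fun v => b v = (i, true)).card = k i)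
    (hcard0 : ∀ i ∈ Finset.Icc 1 m,
      (Finset.univ.filter fun v => b v = (i, false)).card = l i) :
    (thrAdjLoop b).charpoly =
        X ^ (n - (2 * m - 1)) *
        (loopReducedMatrix (aseq m k l (2 * m - 1))).charpoly ∧
    ¬ (loopReducedMatrix (aseq m k l (2 * m - 1))).charpoly.IsRoot 0 ∧
    ((thrAdjLoop b).charpoly.rootMultiplicity 0 = n - (2 * m - 1)) := by
  have ha := aseq_pos hk hl hk1
  have hblocks (j : Fin (2 * m - 1)) : ∃ u, b u = loopBlock m j := by
    have := ha j
    rw [aseq_eq_card hcard1 hcard0, Nat.cast_pos, card_pos] at this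
    obtain ⟨u, hu⟩ := this
    exact ⟨u, (mem_filter.1 hu).2⟩
  have hfac : (thrAdjLoop b).charpoly =
      X ^ (n - (2 * m - 1)) * (loopReducedMatrix (aseq m k l (2 * m - 1))).charpoly := by
    rw [thrAdjLoop_eq_of, loopReducedMatrix_aseq_eq_blockQuotient hcard1 hcard0,
      charpoly_of_comp_eq_X_pow_mul thrAdj b (loopBlock_injective m) hblocks
        fun u v hu => thrAdj_eq_zero_of_notMem_range (hb u) (mem_Icc.1 (hb v)).2 hu,
      Fintype.card_fin, Fintype.card_fin]
  have hroot : ¬ (loopReducedMatrix (aseq m k l (2 * m - 1))).charpoly.IsRoot 0 := by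
    rw [isRoot_charpoly_zero_iff]
    exact det_loopReducedMatrix_ne_zero fun j => (ha j).ne'
  exact ⟨hfac, hroot, by rw [hfac, rootMultiplicity_zero_X_pow_mul hroot]⟩

/-- for a threshold graph with self-loops with `k_1 ≥ 1`, the characteristic
polynomial of the adjacency matrix factors as `x^{n-J} det(x I - B̃)` where `B̃` is the
loop-reduced matrix of size `J = 2m-1` built from `(k_m, l_{m-1}, …, l_1, k_1)`; moreover
`0` is not an eigenvalue of `B̃`, so the algebraic multiplicity of the eigenvalue `0` of
`Ã_G` is exactly `n - (2m-1)`. -/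
theorem thresholdGraphLoops_charpoly_factorization
    (m n : ℕ) (k l : ℕ → ℕ) (hm : 1 ≤ m)
    (hk : ∀ i, 2 ≤ i → i ≤ m → 1 ≤ k i)
    (hl : ∀ i, 1 ≤ i → i + 1 ≤ m → 1 ≤ l i)
    (hk1 : 1 ≤ k 1)
    (hn : n = ∑ i ∈ Finset.Icc 1 m, (k i + l i))
    (b : Fin n → ℕ × Bool)
    (hb : ∀ v, (b v).1 ∈ Finset.Icc 1 m)
    (hcard1 : ∀ i ∈ Finset.Icc 1 m,
      (Finset.univ.filter fun v => b v = (i, true)).card = k i)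
    (hcard0 : ∀ i ∈ Finset.Icc 1 m,
      (Finset.univ.filter fun v => b v = (i, false)).card = l i) :
    (thrAdjLoop b).charpoly =
        X ^ (n - (2 * m - 1)) *
        (loopReducedMatrix (aseq m k l (2 * m - 1))).charpoly ∧
    ¬ (loopReducedMatrix (aseq m k l (2 * m - 1))).charpoly.IsRoot 0 ∧
    ((thrAdjLoop b).charpoly.rootMultiplicity 0 = n - (2 * m - 1)) :=
  thresholdGraphLoops_charpoly_factorization_general m n k l hk hl hk1 b hb hcard1 hcard0
end

section
/- Fix an integer m ≥ 1. Let X, X_1, X_2, … be i.i.d. random variables taking values in the nonnegative integers, with P(X = i) > 0 for every 0 ≤ i ≤ 2m−1. For each n ≥ 2 let A^{(n)} be the random n×n symmetric 0/1 matrix with A^{(n)}[i,j] = 1 if and only if i ≠ j and X_i + X_j > 2m−1. Then, almost surely, the empirical spectral distribution of A^{(n)} converges weakly, as n → ∞, to (1 − F(m−1))·δ_{−1} + F(m−1)·δ_0, where F(m−1) = P(X ≤ m−1). -/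
/-!
The columns of the threshold adjacency matrix `A` at low vertices (`x j ≤ θ / 2`, which carry no
loop) have the form `i ↦ [θ < x i + t]`, and so do the columns of `A + 1` at high vertices, where
only `t = min (x j) (θ + 1)` matters. Hence `rank A ≤ #high + θ + 2` and
`rank (A + 1) ≤ #low + θ + 2`; as geometric multiplicity bounds algebraic multiplicity, all but
`O(θ)` eigenvalues are `0` (about `#low` of them) or `-1` (about `#high`). For `θ = 2m - 1` low
means `X i ≤ m - 1`, and the strong law of large numbers gives `#low / n → P(X ≤ m - 1)`.
-/

open MeasureTheory ProbabilityTheory Filter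

/-- The empirical spectral distribution of an `n × n` real matrix: the uniform probability
measure on the roots of its characteristic polynomial, counted with multiplicity.  (For a
real symmetric matrix the characteristic polynomial splits over `ℝ`, so these roots are
exactly the eigenvalues with algebraic multiplicity.) -/
noncomputable def esd {n : ℕ} (A : Matrix (Fin n) (Fin n) ℝ) : Measure ℝ :=
  (n : ENNReal)⁻¹ • (A.charpoly.roots.map (fun lam => Measure.dirac lam)).sum

open Finset Topology BoundedContinuousFunction

theorem Fin.card_filter_univ_eq_card_filter_range (p : ℕ → Prop) [DecidablePred p] (n : ℕ) :
    #{i : Fin n | p i} = #{i ∈ range n | p i} := by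
  simp only [card_filter]
  exact Fin.sum_univ_eq_sum_range (fun i => if p i then 1 else 0) n

theorem card_filter_le_add_card_filter_lt {ι α : Type*} [Fintype ι] [LinearOrder α] (x : ι → α)
    (k : α) : #{j | x j ≤ k} + #{j | k < x j} = Fintype.card ι := by
  simpa only [not_le, card_univ] using
    card_filter_add_card_filter_not (s := univ) (fun j => x j ≤ k)

theorem Multiset.abs_sum_map_sub_le {α : Type*} [DecidableEq α] (s : Multiset α) (f : α → ℝ)
    {C : ℝ} (hC : ∀ x, |f x| ≤ C) {a b : α} (hab : a ≠ b) {p q r : ℕ}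
    (hcard : card s ≤ p + q) (ha : p ≤ s.count a + r) (hb : q ≤ s.count b + r) :
    |(s.map f).sum - (p * f a + q * f b)| ≤ 4 * r * C := by
  set t := s.filter (fun x => x ≠ a ∧ x ≠ b)
  have hs : s = replicate (s.count a) a + replicate (s.count b) b + t := by
    ext x
    simp only [count_add, count_replicate, t, count_filter]
    rcases eq_or_ne x a with rfl | hxa
    · simp [hab.symm]
    rcases eq_or_ne x b with rfl | hxb
    · simp [hab]
    simp [hxa, hxb, hxa.symm, hxb.symm]
  have ht : |(t.map f).sum| ≤ card t * C := by
    refine abs_sum_le_sum_abs.trans ?_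
    simpa [map_map] using
      sum_le_card_nsmul ((t.map f).map abs) C (by simpa using fun x _ => hC x)
  rw [hs] at hcard ⊢
  simp only [map_add, sum_add, map_replicate, sum_replicate, card_add, card_replicate,
    nsmul_eq_mul] at hcard ⊢
  have hfa := abs_le.mp (hC a)
  have hfb := abs_le.mp (hC b)
  have hta := abs_le.mp ht
  rw [abs_le]
  have hcard' : (count a s : ℝ) + count b s + card t ≤ p + q := by exact_mod_cast hcard
  have ha' : (p : ℝ) ≤ count a s + r := by exact_mod_cast ha
  have hb' : (q : ℝ) ≤ count b s + r := by exact_mod_cast hb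
  constructor <;> nlinarith

section

variable {α E : Type*} [MeasurableSpace α] [MeasurableSingletonClass α] [NormedAddCommGroup E]

theorem integrable_multisetSum_dirac (s : Multiset α) (f : α → E) :
    Integrable f (s.map Measure.dirac).sum := by
  induction s using Multiset.induction with
  | empty => simp
  | cons a t ih =>
    rw [Multiset.map_cons, Multiset.sum_cons, integrable_add_measure]
    exact ⟨integrable_dirac enorm_lt_top, ih⟩

variable [NormedSpace ℝ E] [CompleteSpace E] in
theorem integral_multisetSum_dirac (s : Multiset α) (f : α → E) :
    ∫ x, f x ∂(s.map Measure.dirac).sum = (s.map f).sum := by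
  induction s using Multiset.induction with
  | empty => simp
  | cons a t ih =>
    rw [Multiset.map_cons, Multiset.sum_cons, Multiset.map_cons, Multiset.sum_cons,
      integral_add_measure (integrable_dirac enorm_lt_top) (integrable_multisetSum_dirac t f),
      integral_dirac, ih]

end

namespace Matrix

variable {m n ι K : Type*} [Fintype n] [DecidableEq n] [Fintype ι] [Field K]

theorem card_le_rank_sub_add_rootMultiplicity_charpoly (A : Matrix n n K) (μ : K) :
    Fintype.card n ≤ (A - μ • 1).rank + A.charpoly.rootMultiplicity μ := by
  have hker : Module.End.eigenspace A.toLin' μ = LinearMap.ker (A - μ • 1).mulVecLin := by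
    rw [Module.End.eigenspace_def, ← toLin'_apply', map_sub, map_smul, toLin'_one]; rfl
  have hgeom := LinearMap.finrank_eigenspace_le A.toLin' μ
  rw [hker, charpoly_toLin'] at hgeom
  have hrank := LinearMap.finrank_range_add_finrank_ker (A - μ • 1).mulVecLin
  rw [Module.finrank_fintype_fun_eq_card] at hrank
  rw [rank]
  omega

theorem rank_le_card_add_card_of_col_mem_range (A : Matrix m n K) (s : Finset n)
    (v : ι → m → K) (hv : ∀ j ∉ s, Aᵀ j ∈ Set.range v) :
    A.rank ≤ s.card + Fintype.card ι := by
  classical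
  set S : Finset (m → K) := s.image (fun j => Aᵀ j) ∪ Finset.univ.image v
  have hspan : Submodule.span K (Set.range Aᵀ) ≤ Submodule.span K S := by
    refine Submodule.span_mono ?_
    rintro _ ⟨j, rfl⟩
    by_cases hj : j ∈ s
    · exact Finset.mem_union_left _ (Finset.mem_image_of_mem _ hj)
    · obtain ⟨t, ht⟩ := hv j hj
      exact Finset.mem_union_right _ (ht ▸ Finset.mem_image_of_mem _ (Finset.mem_univ t))
  calc A.rank ≤ S.card := by
        rw [rank_eq_finrank_span_cols]
        exact (Submodule.finrank_mono hspan).trans (finrank_span_finset_le_card _)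
    _ ≤ s.card + Fintype.card ι :=
        (Finset.card_union_le _ _).trans (add_le_add Finset.card_image_le Finset.card_image_le)

end Matrix

theorem integral_esd {n : ℕ} (A : Matrix (Fin n) (Fin n) ℝ) (f : ℝ → ℝ) :
    ∫ x, f x ∂esd A = (n : ℝ)⁻¹ * (A.charpoly.roots.map f).sum := by
  rw [esd, integral_smul_measure, integral_multisetSum_dirac, ENNReal.toReal_inv,
    ENNReal.toReal_natCast, smul_eq_mul]

theorem abs_integral_esd_sub_le {n : ℕ} (A : Matrix (Fin n) (Fin n) ℝ) (f : ℝ →ᵇ ℝ) {a b : ℝ}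
    (hab : a ≠ b) {p q r : ℕ} (hpq : p + q = n) (ha : p ≤ A.charpoly.roots.count a + r)
    (hb : q ≤ A.charpoly.roots.count b + r) :
    |∫ x, f x ∂esd A - (p / n * f a + q / n * f b)| ≤ 4 * r * ‖f‖ / n := by
  have hcard : Multiset.card A.charpoly.roots ≤ p + q := by
    simpa [hpq] using Polynomial.card_roots' A.charpoly
  have hsum := Multiset.abs_sum_map_sub_le _ f f.norm_coe_le_norm hab hcard ha hb
  rw [integral_esd, show (n : ℝ)⁻¹ * (A.charpoly.roots.map f).sum - (p / n * f a + q / n * f b)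
    = ((A.charpoly.roots.map f).sum - (p * f a + q * f b)) / n by ring, abs_div, Nat.abs_cast]
  gcongr

theorem tendsto_integral_esd_of_count_roots (A : ∀ n : ℕ, Matrix (Fin n) (Fin n) ℝ)
    (f : ℝ →ᵇ ℝ) {a b F : ℝ} (hab : a ≠ b) (p q : ℕ → ℕ) (r : ℕ) (hpq : ∀ n, p n + q n = n)
    (ha : ∀ n, p n ≤ (A n).charpoly.roots.count a + r)
    (hb : ∀ n, q n ≤ (A n).charpoly.roots.count b + r)
    (hq : Tendsto (fun n => (q n : ℝ) / n) atTop (𝓝 F)) :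
    Tendsto (fun n => ∫ x, f x ∂esd (A n)) atTop (𝓝 ((1 - F) * f a + F * f b)) := by
  have hp : ∀ᶠ n in atTop, (p n : ℝ) / n = 1 - q n / n := by
    filter_upwards [eventually_ge_atTop 1] with n hn
    have : (p n : ℝ) + q n = n := by exact_mod_cast hpq n
    field_simp
    linarith
  have hmain : Tendsto (fun n => (p n : ℝ) / n * f a + q n / n * f b) atTop
      (𝓝 ((1 - F) * f a + F * f b)) :=
    (((tendsto_const_nhds.sub hq).congr' (hp.mono fun n h => h.symm)).mul_const _).add
      (hq.mul_const _)
  refine hmain.congr_dist (squeeze_zero (fun n => dist_nonneg) (fun n => ?_)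
    (tendsto_const_div_atTop_nhds_zero_nat (4 * r * ‖f‖)))
  rw [dist_comm, Real.dist_eq]
  exact abs_integral_esd_sub_le (A n) f hab (hpq n) (ha n) (hb n)

def thresholdAdjMatrix {ι R : Type*} [DecidableEq ι] [Zero R] [One R] (θ : ℕ) (x : ι → ℕ) :
    Matrix ι ι R :=
  Matrix.of fun i j => if i ≠ j ∧ θ < x i + x j then 1 else 0

section Threshold

variable {ι K : Type*} [Fintype ι] [DecidableEq ι] [Field K] (θ : ℕ) (x : ι → ℕ)

theorem rank_thresholdAdjMatrix_le :
    (thresholdAdjMatrix θ x : Matrix ι ι K).rank ≤ #{j | θ / 2 < x j} + (θ + 2) := by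
  refine (Matrix.rank_le_card_add_card_of_col_mem_range _ _
    (fun (t : Fin (θ + 2)) i => if θ < x i + t then (1 : K) else 0) fun j hj => ?_).trans_eq
    (by rw [Fintype.card_fin])
  replace hj : x j ≤ θ / 2 := by simpa using hj
  refine ⟨⟨x j, by omega⟩, funext fun i => ?_⟩
  rcases eq_or_ne i j with rfl | hij
  · simp [thresholdAdjMatrix, show ¬θ < x i + x i by omega]
  · simp [thresholdAdjMatrix, hij]

theorem rank_thresholdAdjMatrix_add_one_le :
    (thresholdAdjMatrix θ x + 1 : Matrix ι ι K).rank ≤ #{j | x j ≤ θ / 2} + (θ + 2) := by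
  refine (Matrix.rank_le_card_add_card_of_col_mem_range _ _
    (fun (t : Fin (θ + 2)) i => if θ < x i + t then (1 : K) else 0) fun j hj => ?_).trans_eq
    (by rw [Fintype.card_fin])
  replace hj : θ / 2 < x j := by simpa using hj
  refine ⟨⟨min (x j) (θ + 1), by omega⟩, funext fun i => ?_⟩
  rcases eq_or_ne i j with rfl | hij
  · simp [thresholdAdjMatrix, show θ < x i + min (x i) (θ + 1) by omega]
  · have : θ < x i + min (x j) (θ + 1) ↔ θ < x i + x j := by omega
    simp [thresholdAdjMatrix, hij, this]

theorem card_filter_le_rootMultiplicity_zero_thresholdAdjMatrix :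
    #{j | x j ≤ θ / 2} ≤ (thresholdAdjMatrix θ x : Matrix ι ι K).charpoly.rootMultiplicity 0
      + (θ + 2) := by
  have hmult :=
    (thresholdAdjMatrix θ x : Matrix ι ι K).card_le_rank_sub_add_rootMultiplicity_charpoly 0
  rw [zero_smul, sub_zero] at hmult
  have := rank_thresholdAdjMatrix_le (K := K) θ x
  have := card_filter_le_add_card_filter_lt x (θ / 2)
  omega

theorem card_filter_lt_le_rootMultiplicity_neg_one_thresholdAdjMatrix :
    #{j | θ / 2 < x j} ≤ (thresholdAdjMatrix θ x : Matrix ι ι K).charpoly.rootMultiplicity (-1)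
      + (θ + 2) := by
  have hmult :=
    (thresholdAdjMatrix θ x : Matrix ι ι K).card_le_rank_sub_add_rootMultiplicity_charpoly (-1)
  rw [neg_smul, one_smul, sub_neg_eq_add] at hmult
  have := rank_thresholdAdjMatrix_add_one_le (K := K) θ x
  have := card_filter_le_add_card_filter_lt x (θ / 2)
  omega

end Threshold

theorem tendsto_integral_esd_thresholdAdjMatrix (θ : ℕ) (x : ℕ → ℕ) (f : ℝ →ᵇ ℝ) {F : ℝ}
    (hF : Tendsto (fun n => (#{i ∈ range n | x i ≤ θ / 2} : ℝ) / n) atTop (𝓝 F)) :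
    Tendsto (fun n => ∫ y, f y ∂esd (thresholdAdjMatrix θ fun i : Fin n => x i)) atTop
      (𝓝 ((1 - F) * f (-1) + F * f 0)) := by
  refine tendsto_integral_esd_of_count_roots _ f (by norm_num)
    (fun n => #{i : Fin n | θ / 2 < x i}) (fun n => #{i : Fin n | x i ≤ θ / 2}) (θ + 2)
    (fun n => ?_) (fun n => ?_) (fun n => ?_) ?_
  · rw [add_comm, card_filter_le_add_card_filter_lt, Fintype.card_fin]
  · rw [Polynomial.count_roots]
    exact card_filter_lt_le_rootMultiplicity_neg_one_thresholdAdjMatrix θ _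
  · rw [Polynomial.count_roots]
    exact card_filter_le_rootMultiplicity_zero_thresholdAdjMatrix θ _
  · refine hF.congr fun n => ?_
    rw [Fin.card_filter_univ_eq_card_filter_range (fun k => x k ≤ θ / 2)]

theorem ae_tendsto_card_filter_div {Ω α : Type*} {mΩ : MeasurableSpace Ω} [MeasurableSpace α]
    {μ : Measure Ω} [IsFiniteMeasure μ] {X : ℕ → Ω → α}
    (hindep : Pairwise fun i j => IndepFun (X i) (X j) μ)
    (hident : ∀ i, IdentDistrib (X i) (X 0) μ μ) {p : α → Prop} [DecidablePred p]
    (hp : MeasurableSet {a | p a}) :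
    ∀ᵐ ω ∂μ, Tendsto (fun n : ℕ => (#{i ∈ range n | p (X i ω)} : ℝ) / n) atTop
      (𝓝 (μ {ω | p (X 0 ω)}).toReal) := by
  set g : α → ℝ := {a | p a}.indicator 1
  have hX : AEMeasurable (X 0) μ := (hident 0).aemeasurable_fst
  have hg : Measurable g := measurable_one.indicator hp
  have hint : Integrable (g ∘ X 0) μ :=
    (integrable_const (1 : ℝ)).mono
      (hg.comp_aemeasurable hX).aestronglyMeasurable
      (Eventually.of_forall fun ω => by
        simp only [Function.comp_apply, g, Set.indicator_apply]
        split_ifs <;> simp)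
  have hmean : μ[g ∘ X 0] = (μ {ω | p (X 0 ω)}).toReal := by
    change ∫ ω, g (X 0 ω) ∂μ = _
    rw [← integral_map hX hg.aestronglyMeasurable, integral_indicator_one hp, measureReal_def,
      Measure.map_apply_of_aemeasurable hX hp]
    rfl
  filter_upwards [strong_law_ae_real (fun i => g ∘ X i) hint
    (fun i j hij => (hindep hij).comp hg hg) (fun i => (hident i).comp hg)] with ω hω
  rw [hmean] at hω
  convert hω using 3 with n
  simp [g, Set.indicator_apply, Finset.sum_boole]

theorem thresholdModel_esd_tendsto_general
    {Ω : Type*} [MeasureSpace Ω] [IsProbabilityMeasure (ℙ : Measure Ω)]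
    (m : ℕ) (X : ℕ → Ω → ℕ)
    (hindep : iIndepFun X ℙ)
    (hident : ∀ i, IdentDistrib (X i) (X 0) ℙ ℙ) :
    ∀ᵐ ω ∂(ℙ : Measure Ω), ∀ f : BoundedContinuousFunction ℝ ℝ,
      Tendsto
        (fun n : ℕ => ∫ x, f x ∂ esd (Matrix.of fun i j : Fin n =>
          if i ≠ j ∧ 2 * m - 1 < X i ω + X j ω then (1 : ℝ) else 0))
        atTop
        (nhds ((1 - (ℙ {ω | X 0 ω ≤ m - 1}).toReal) * f (-1)
              + (ℙ {ω | X 0 ω ≤ m - 1}).toReal * f 0)) := by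
  have hθ : (2 * m - 1) / 2 = m - 1 := by omega
  filter_upwards [ae_tendsto_card_filter_div (fun i j hij => hindep.indepFun hij) hident
    (p := fun k => k ≤ m - 1) MeasurableSet.of_discrete] with ω hω f
  exact tendsto_integral_esd_thresholdAdjMatrix (2 * m - 1) (X · ω) f (by rwa [hθ])

/-- for the threshold network model with i.i.d. nonnegative-integer-valued
hidden variables `X_i` satisfying `P(X = i) > 0` for `0 ≤ i ≤ 2m-1` and threshold
`θ = 2m-1`, the empirical spectral distribution of the adjacency matrix converges weakly,
almost surely, to `(1 - F(m-1))·δ_{-1} + F(m-1)·δ_0` where `F(m-1) = P(X ≤ m-1)`. -/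
theorem thresholdModel_esd_tendsto
    {Ω : Type*} [MeasureSpace Ω] [IsProbabilityMeasure (ℙ : Measure Ω)]
    (m : ℕ) (hm : 1 ≤ m) (X : ℕ → Ω → ℕ)
    (hmeas : ∀ i, Measurable (X i))
    (hindep : iIndepFun X ℙ)
    (hident : ∀ i, IdentDistrib (X i) (X 0) ℙ ℙ)
    (hpos : ∀ i ≤ 2 * m - 1, 0 < ℙ {ω | X 0 ω = i}) :
    ∀ᵐ ω ∂(ℙ : Measure Ω), ∀ f : BoundedContinuousFunction ℝ ℝ,
      Tendsto
        (fun n : ℕ => ∫ x, f x ∂ esd (Matrix.of fun i j : Fin n =>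
          if i ≠ j ∧ 2 * m - 1 < X i ω + X j ω then (1 : ℝ) else 0))
        atTop
        (nhds ((1 - (ℙ {ω | X 0 ω ≤ m - 1}).toReal) * f (-1)
              + (ℙ {ω | X 0 ω ≤ m - 1}).toReal * f 0)) :=
  thresholdModel_esd_tendsto_general m X hindep hident
end

section
/- Let (Ỹ_i)_{i≥1} be i.i.d. random variables with P(Ỹ_i = 1) = P(Ỹ_i = 0) = 1/2, and for n ≥ 2 set T_n = n − 2·Σ_{i=1}^{n−1} (1 − Ỹ_i)·Ỹ_{i+1} − Ỹ_1. Then T_n/n converges to 1/2 almost surely as n → ∞. -/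
open MeasureTheory ProbabilityTheory Filter Finset
open scoped ENNReal Topology

/-!
With `Z i = (1 - Y i) * Y (i + 1)` we have `T n = n - 2 ∑_{i < n} Z i + 2 Z 0 - Y 1`, so it
suffices that the Cesàro means of `Z` tend to `E[Z 0] = E[1 - Y 0] E[Y 1] = 1/4`. The `Z i` are
identically distributed but not pairwise independent, since `Z i` and `Z (i + 1)` share `Y (i + 1)`.
The even- and odd-indexed subsequences, however, are built from disjoint blocks `{i, i + 1}`, so
Etemadi's strong law applies to each of them, and the two halves recombine.
-/

section Deterministic

lemma sum_range_eq_sum_even_add_sum_odd (z : ℕ → ℝ) (n : ℕ) :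
    ∑ i ∈ range n, z i =
      ∑ k ∈ range ((n + 1) / 2), z (2 * k) + ∑ k ∈ range (n / 2), z (2 * k + 1) := by
  induction n with
  | zero => simp
  | succ n ih =>
    rw [sum_range_succ, ih]
    rcases Nat.even_or_odd' n with ⟨k, rfl | rfl⟩
    · rw [show (2 * k + 1 + 1) / 2 = k + 1 by omega, show (2 * k + 1) / 2 = k by omega,
        show 2 * k / 2 = k by omega, sum_range_succ]
      ring
    · rw [show (2 * k + 1 + 1 + 1) / 2 = k + 1 by omega, show (2 * k + 1 + 1) / 2 = k + 1 by omega,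
        show (2 * k + 1) / 2 = k by omega, sum_range_succ (fun k => z (2 * k + 1))]
      ring

lemma tendsto_add_div_two_div (r : ℕ) :
    Tendsto (fun n : ℕ => (((n + r) / 2 : ℕ) : ℝ) / n) atTop (𝓝 (1 / 2)) := by
  have lower : Tendsto (fun n : ℕ => 1 / 2 - (1 / 2) / (n : ℝ)) atTop (𝓝 (1 / 2)) := by
    simpa using (tendsto_const_div_atTop_nhds_zero_nat (1 / 2 : ℝ)).const_sub (1 / 2 : ℝ)
  have upper : Tendsto (fun n : ℕ => 1 / 2 + (r / 2) / (n : ℝ)) atTop (𝓝 (1 / 2)) := by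
    simpa using (tendsto_const_div_atTop_nhds_zero_nat ((r : ℝ) / 2)).const_add (1 / 2 : ℝ)
  refine tendsto_of_tendsto_of_tendsto_of_le_of_le' lower upper ?_ ?_ <;>
    filter_upwards [eventually_gt_atTop 0] with n hn <;>
    have hn' : (0 : ℝ) < n := by exact_mod_cast hn
  · have : (n : ℝ) ≤ 2 * (((n + r) / 2 : ℕ) : ℝ) + 1 := by exact_mod_cast (by omega)
    rw [le_div_iff₀ hn', sub_mul, div_mul_cancel₀ _ hn'.ne']
    linarith
  · have : 2 * (((n + r) / 2 : ℕ) : ℝ) ≤ n + r := by exact_mod_cast (by omega)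
    rw [div_le_iff₀ hn', add_mul, div_mul_cancel₀ _ hn'.ne']
    linarith

lemma tendsto_comp_add_div_two_div_of_tendsto {S : ℕ → ℝ} {L : ℝ}
    (h : Tendsto (fun m : ℕ => S m / m) atTop (𝓝 L)) (r : ℕ) :
    Tendsto (fun n : ℕ => S ((n + r) / 2) / n) atTop (𝓝 (L / 2)) := by
  have hc : Tendsto (fun n : ℕ => (n + r) / 2) atTop atTop :=
    tendsto_atTop_atTop.2 fun b => ⟨2 * b, fun n hn => by omega⟩
  rw [div_eq_mul_one_div L]
  refine ((h.comp hc).mul (tendsto_add_div_two_div r)).congr' ?_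
  filter_upwards [hc.eventually (eventually_gt_atTop 0)] with n hn
  have : ((n + r) / 2 : ℕ) ≠ (0 : ℝ) := by exact_mod_cast hn.ne'
  simp only [Function.comp_apply]
  field_simp

lemma tendsto_sum_range_div_of_even_of_odd {z : ℕ → ℝ} {L : ℝ}
    (heven : Tendsto (fun n : ℕ => (∑ k ∈ range n, z (2 * k)) / n) atTop (𝓝 L))
    (hodd : Tendsto (fun n : ℕ => (∑ k ∈ range n, z (2 * k + 1)) / n) atTop (𝓝 L)) :
    Tendsto (fun n : ℕ => (∑ i ∈ range n, z i) / n) atTop (𝓝 L) := by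
  have := (tendsto_comp_add_div_two_div_of_tendsto heven 1).add
    (tendsto_comp_add_div_two_div_of_tendsto hodd 0)
  rw [add_halves] at this
  refine this.congr fun n => ?_
  rw [sum_range_eq_sum_even_add_sum_odd z n, add_div, add_zero]

lemma sum_Icc_one_pred_eq_sum_range_sub (z : ℕ → ℝ) {n : ℕ} (hn : 0 < n) :
    ∑ i ∈ Icc 1 (n - 1), z i = ∑ i ∈ range n, z i - z 0 := by
  obtain ⟨m, rfl⟩ := Nat.exists_eq_succ_of_ne_zero hn.ne'
  rw [sum_range_succ', Nat.succ_sub_one, ← Ico_add_one_right_eq_Icc, range_eq_Ico,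
    sum_Ico_add' z 0 m 1, add_sub_cancel_right, zero_add]

lemma tendsto_sub_two_mul_sum_Icc_div {z : ℕ → ℝ} {L : ℝ} (c : ℝ)
    (h : Tendsto (fun n : ℕ => (∑ i ∈ range n, z i) / n) atTop (𝓝 L)) :
    Tendsto (fun n : ℕ => ((n : ℝ) - 2 * ∑ i ∈ Icc 1 (n - 1), z i - c) / n) atTop
      (𝓝 (1 - 2 * L)) := by
  have hlim := ((tendsto_const_nhds (x := (1 : ℝ))).sub (h.const_mul 2)).add
    (tendsto_const_div_atTop_nhds_zero_nat (2 * z 0 - c))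
  rw [add_zero] at hlim
  refine hlim.congr' ?_
  filter_upwards [eventually_gt_atTop 0] with n hn
  have hn' : (n : ℝ) ≠ 0 := by exact_mod_cast hn.ne'
  rw [sum_Icc_one_pred_eq_sum_range_sub z hn]
  field_simp
  ring

end Deterministic

section ZeroOne

variable {Ω : Type*} [MeasurableSpace Ω] {μ : Measure Ω} {X : Ω → ℝ}

lemma ae_eq_zero_or_one_of_measure_add_eq_one [IsProbabilityMeasure μ] (hX : Measurable X)
    (h : μ {ω | X ω = 0} + μ {ω | X ω = 1} = 1) : ∀ᵐ ω ∂μ, X ω = 0 ∨ X ω = 1 := by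
  have hdisj : Disjoint {ω | X ω = 0} {ω | X ω = 1} := by
    rw [Set.disjoint_left]
    intro ω h0 h1
    exact zero_ne_one (h0.symm.trans h1)
  have hunion : μ ({ω | X ω = 0} ∪ {ω | X ω = 1}) = 1 := by
    rwa [measure_union hdisj (hX (measurableSet_singleton 1))]
  exact (ae_iff_measure_eq (by measurability)).2 (by rw [measure_univ, ← hunion]; rfl)

lemma map_eq_of_ae_eq_zero_or_one (hX : Measurable X) (h : ∀ᵐ ω ∂μ, X ω = 0 ∨ X ω = 1) :
    μ.map X = μ {ω | X ω = 0} • Measure.dirac 0 + μ {ω | X ω = 1} • Measure.dirac 1 := by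
  have hsupp : ∀ᵐ x ∂μ.map X, x ∈ ({0} ∪ {1} : Set ℝ) := by
    rw [ae_map_iff hX.aemeasurable (by measurability)]
    exact h
  rw [← Measure.restrict_eq_self_of_ae_mem hsupp,
    Measure.restrict_union (by norm_num) (measurableSet_singleton 1),
    Measure.restrict_singleton, Measure.restrict_singleton,
    Measure.map_apply hX (measurableSet_singleton 0),
    Measure.map_apply hX (measurableSet_singleton 1)]
  rfl

lemma integral_eq_measureReal_of_ae_eq_zero_or_one (hX : Measurable X)
    (h : ∀ᵐ ω ∂μ, X ω = 0 ∨ X ω = 1) : ∫ ω, X ω ∂μ = μ.real {ω | X ω = 1} := by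
  rw [show {ω | X ω = 1} = X ⁻¹' {1} from rfl,
    ← integral_indicator_one (hX (measurableSet_singleton 1))]
  refine integral_congr_ae ?_
  filter_upwards [h] with ω hω
  rcases hω with hω | hω <;> simp [Set.indicator, hω]

lemma integrable_of_ae_eq_zero_or_one [IsFiniteMeasure μ] (hX : Measurable X)
    (h : ∀ᵐ ω ∂μ, X ω = 0 ∨ X ω = 1) : Integrable X μ :=
  Integrable.of_bound hX.aestronglyMeasurable 1 <| by
    filter_upwards [h] with ω hω
    rcases hω with hω | hω <;> simp [hω]

end ZeroOne

section ConsecutivePairs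

variable {Ω E : Type*} [MeasurableSpace Ω] [MeasurableSpace E] {μ : Measure Ω}
  [IsProbabilityMeasure μ] {Y : ℕ → Ω → E}

lemma identDistrib_prodMk_of_iIndepFun (hindep : iIndepFun Y μ)
    (hident : ∀ i, IdentDistrib (Y i) (Y 0) μ μ) {a b : ℕ} (hab : a ≠ b) :
    IdentDistrib (fun ω => (Y a ω, Y b ω)) (fun ω => (Y 0 ω, Y 1 ω)) μ μ :=
  (hident a).prodMk ((hident b).trans (hident 1).symm) (hindep.indepFun hab)
    (hindep.indepFun zero_ne_one)

lemma strong_law_comp_pair_of_parity (hmeas : ∀ i, Measurable (Y i)) (hindep : iIndepFun Y μ)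
    (hident : ∀ i, IdentDistrib (Y i) (Y 0) μ μ) {g : E × E → ℝ} (hg : Measurable g)
    (hint : Integrable (fun ω => g (Y 0 ω, Y 1 ω)) μ) (r : ℕ) :
    ∀ᵐ ω ∂μ, Tendsto
      (fun n : ℕ => (∑ k ∈ range n, g (Y (2 * k + r) ω, Y (2 * k + r + 1) ω)) / n) atTop
      (𝓝 μ[fun ω => g (Y 0 ω, Y 1 ω)]) := by
  have hblock : ∀ k, IdentDistrib (fun ω => g (Y (2 * k + r) ω, Y (2 * k + r + 1) ω))
      (fun ω => g (Y 0 ω, Y 1 ω)) μ μ :=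
    fun k => (identDistrib_prodMk_of_iIndepFun hindep hident (by omega)).comp hg
  have hslln := strong_law_ae_real (fun k ω => g (Y (2 * k + r) ω, Y (2 * k + r + 1) ω))
    ((hblock 0).integrable_iff.2 hint)
    (fun k l hkl => (hindep.indepFun_prodMk_prodMk hmeas _ _ _ _
      (by omega) (by omega) (by omega) (by omega)).comp hg hg)
    (fun k => (hblock k).trans (hblock 0).symm)
  rwa [(hblock 0).integral_eq] at hslln

theorem strong_law_comp_consecutive_pair (hmeas : ∀ i, Measurable (Y i))
    (hindep : iIndepFun Y μ) (hident : ∀ i, IdentDistrib (Y i) (Y 0) μ μ) {g : E × E → ℝ}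
    (hg : Measurable g) (hint : Integrable (fun ω => g (Y 0 ω, Y 1 ω)) μ) :
    ∀ᵐ ω ∂μ, Tendsto (fun n : ℕ => (∑ i ∈ range n, g (Y i ω, Y (i + 1) ω)) / n)
      atTop (𝓝 μ[fun ω => g (Y 0 ω, Y 1 ω)]) := by
  filter_upwards [strong_law_comp_pair_of_parity hmeas hindep hident hg hint 0,
    strong_law_comp_pair_of_parity hmeas hindep hident hg hint 1] with ω heven hodd
  exact tendsto_sum_range_div_of_even_of_odd heven hodd

end ConsecutivePairs

/-- if `(Ỹ_i)` are i.i.d. Bernoulli(1/2) random variables and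
`T_n = n - 2 Σ_{i=1}^{n-1} (1 - Ỹ_i) Ỹ_{i+1} - Ỹ_1`, then `T_n / n → 1/2` almost surely. -/
theorem bernoulli_Tn_lln
    {Ω : Type*} [MeasureSpace Ω] [IsProbabilityMeasure (ℙ : Measure Ω)]
    (Y : ℕ → Ω → ℝ)
    (hmeas : ∀ i, Measurable (Y i))
    (hindep : iIndepFun Y ℙ)
    (hdist : ∀ i, ℙ {ω | Y i ω = 1} = 1 / 2 ∧ ℙ {ω | Y i ω = 0} = 1 / 2) :
    ∀ᵐ ω ∂(ℙ : Measure Ω),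
      Tendsto
        (fun n : ℕ =>
          ((n : ℝ) - 2 * ∑ i ∈ Finset.Icc 1 (n - 1), (1 - Y i ω) * Y (i + 1) ω - Y 1 ω) / n)
        atTop (nhds (1 / 2)) := by
  have h01 (i : ℕ) : ∀ᵐ ω, Y i ω = 0 ∨ Y i ω = 1 :=
    ae_eq_zero_or_one_of_measure_add_eq_one (hmeas i) <| by
      rw [(hdist i).1, (hdist i).2, ENNReal.add_halves]
  have hident (i : ℕ) : IdentDistrib (Y i) (Y 0) ℙ ℙ :=
    ⟨(hmeas i).aemeasurable, (hmeas 0).aemeasurable, by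
      rw [map_eq_of_ae_eq_zero_or_one (hmeas i) (h01 i),
        map_eq_of_ae_eq_zero_or_one (hmeas 0) (h01 0), (hdist i).1, (hdist i).2, (hdist 0).1,
        (hdist 0).2]⟩
  have hmean (i : ℕ) : ∫ ω, Y i ω = 1 / 2 := by
    rw [integral_eq_measureReal_of_ae_eq_zero_or_one (hmeas i) (h01 i), measureReal_def,
      (hdist i).1]
    simp
  have hint (i : ℕ) : Integrable (Y i) ℙ := integrable_of_ae_eq_zero_or_one (hmeas i) (h01 i)
  have hindep01 : IndepFun (fun ω => 1 - Y 0 ω) (Y 1) ℙ :=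
    (hindep.indepFun zero_ne_one).comp (measurable_const.sub measurable_id) measurable_id
  have hmean01 : ∫ ω, (1 - Y 0 ω) * Y 1 ω = 1 / 4 := by
    rw [hindep01.integral_fun_mul_eq_mul_integral (by fun_prop) (hmeas 1).aestronglyMeasurable,
      integral_sub (integrable_const 1) (hint 0), hmean, hmean]
    norm_num
  filter_upwards [strong_law_comp_consecutive_pair hmeas hindep hident
    (g := fun p => (1 - p.1) * p.2) (by fun_prop)
    (hindep01.integrable_mul ((integrable_const 1).sub (hint 0)) (hint 1))] with ω hω
  rw [hmean01] at hω
  convert tendsto_sub_two_mul_sum_Icc_div (Y 1 ω) hω using 2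
  norm_num
end

section
/- Let 0 < p < 1, let n ≥ 2, and let X_1, …, X_n be i.i.d. random variables with P(X_i = 1) = p and P(X_i = 0) = 1 − p. Let A be the random n×n symmetric 0/1 matrix with A[i,j] = 1 if and only if i ≠ j and X_i + X_j ≥ 1, and let μ_n denote the mean spectral distribution, i.e., for each Borel set B ⊆ ℝ, μ_n(B) is the expectation of the empirical spectral distribution of A evaluated at B. Then for every Borel set B, μ_n(B) = (p − 1/n)·δ_{−1}(B) + (1 − p − 1/n)·δ_0(B) + (1/n)·Σ_{k=0}^{n} binom(n,k)·p^k·(1−p)^{n−k}·(δ_{λ_−(k)}(B) + δ_{λ_+(k)}(B)), where λ_±(k) = ((k−1) ± √((k−1)² + 4k(n−k)))/2. -/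
/-!
Let `S = {i | X i ≥ 1}` and `k = #S`. Up to a permutation the adjacency matrix is that of the
complete split graph (a clique on `S`, joined to every vertex of the independent set `Sᶜ`), and a
Schur complement computation of `det (x - A)` shows that its spectrum is `-1` with multiplicity
`k - 1`, `0` with multiplicity `n - k - 1`, and the two roots `λ±(k)` of
`x² - (k - 1) x - k (n - k)`.
By independence `k` is Binomial(n, p); the zeroth and first binomial moments `1` and `n p` turn
the weights `(k - 1) / n` and `(n - k - 1) / n` into `p - 1/n` and `1 - p - 1/n`.
-/

open MeasureTheory ProbabilityTheory Finset

section CompleteSplit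

open Matrix Polynomial

variable {α β : Type*} [DecidableEq α]

def completeSplitMatrix {R : Type*} [Zero R] [One R] : Matrix (α ⊕ β) (α ⊕ β) R :=
  fromBlocks (of fun a b => if a = b then 0 else 1) (of fun _ _ => 1) (of fun _ _ => 1) 0

variable {K : Type*} [Field K] [Fintype α] [Fintype β] [DecidableEq β]

lemma det_smul_one_sub_completeSplitMatrix {x : K} (hx : x ≠ 0) (hx1 : x + 1 ≠ 0) :
    x * (x + 1) * det (x • 1 - completeSplitMatrix : Matrix (α ⊕ β) (α ⊕ β) K) =
      x ^ Fintype.card β * (x + 1) ^ Fintype.card α *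
        (x ^ 2 - (Fintype.card α - 1) * x - Fintype.card α * Fintype.card β) := by
  have hinv : (x • 1 : Matrix β β K) * (x⁻¹ • 1) = 1 := by
    rw [smul_mul_smul_comm, one_mul, mul_inv_cancel₀ hx, one_smul]
  let : Invertible (x • 1 : Matrix β β K) := invertibleOfRightInverse _ _ hinv
  have hblocks : (x • 1 - completeSplitMatrix : Matrix (α ⊕ β) (α ⊕ β) K) =
      fromBlocks (x • 1 - of fun a b => if a = b then 0 else 1) (of fun _ _ => -1)
        (of fun _ _ => -1) (x • 1 : Matrix β β K) := by
    ext (a | a) (b | b) <;> simp [completeSplitMatrix, one_apply]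
  -- the Schur complement of the `β` block is `(x + 1) • (1 - c • J)`, with `J` the all-ones matrix
  have hschur : (x • (1 : Matrix α α K) - of fun a b => if a = b then 0 else 1) -
        (of fun _ _ => -1 : Matrix α β K) * ⅟(x • 1 : Matrix β β K) *
          (of fun _ _ => -1 : Matrix β α K) =
      (x + 1) • (1 + replicateCol (Fin 1) (fun _ => -(1 + Fintype.card β / x) / (x + 1)) *
        replicateRow (Fin 1) (fun _ : α => (1 : K))) := by
    rw [invOf_eq_right_inv hinv]
    ext a b
    by_cases h : a = b <;> simp [h, Matrix.mul_apply, one_apply] <;> field_simp <;> ring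
  rw [hblocks, det_fromBlocks₂₂, hschur, det_smul, det_smul, det_one]
  erw [det_one_add_replicateCol_mul_replicateRow]
  simp only [dotProduct, Finset.sum_const, Finset.card_univ, nsmul_eq_mul, mul_one, one_mul]
  field_simp
  ring

lemma charpoly_completeSplitMatrix [Infinite K] :
    X * (X + 1) * (completeSplitMatrix : Matrix (α ⊕ β) (α ⊕ β) K).charpoly =
      X ^ Fintype.card β * (X + 1) ^ Fintype.card α *
        (X ^ 2 - C ((Fintype.card α : K) - 1) * X - C ((Fintype.card α : K) * Fintype.card β)) := by
  rw [← sub_eq_zero]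
  refine eq_zero_of_infinite_isRoot _ (Set.Infinite.mono (s := {0, -1}ᶜ) (fun x hx => ?_)
    (Set.toFinite _).infinite_compl)
  have hx0 : x ≠ 0 := fun h => hx (Or.inl h)
  have hx1 : x + 1 ≠ 0 := fun h => hx (Or.inr (eq_neg_of_add_eq_zero_left h))
  simp [eval_charpoly, ← smul_one_eq_diagonal, det_smul_one_sub_completeSplitMatrix hx0 hx1]

end CompleteSplit

section Threshold

open Matrix Polynomial

variable {ι : Type*} [DecidableEq ι]

def thresholdMatrix {R : Type*} [Zero R] [One R] (S : Finset ι) : Matrix ι ι R :=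
  of fun i j => if i ≠ j ∧ (i ∈ S ∨ j ∈ S) then 1 else 0

variable {K : Type*} [Field K]

lemma submatrix_sumCompl_thresholdMatrix (S : Finset ι) :
    (thresholdMatrix S : Matrix ι ι K).submatrix (Equiv.sumCompl (· ∈ S)) (Equiv.sumCompl (· ∈ S))
      = completeSplitMatrix := by
  ext (a | a) (b | b)
  · simp [thresholdMatrix, completeSplitMatrix, a.2]
  · simp [thresholdMatrix, completeSplitMatrix, a.2, ne_of_mem_of_not_mem a.2 b.2]
  · simp [thresholdMatrix, completeSplitMatrix, b.2, (ne_of_mem_of_not_mem b.2 a.2).symm]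
  · simp [thresholdMatrix, completeSplitMatrix, a.2, b.2]

variable [Fintype ι]

lemma charpoly_thresholdMatrix [Infinite K] (S : Finset ι) :
    X * (X + 1) * (thresholdMatrix S : Matrix ι ι K).charpoly =
      X ^ (Fintype.card ι - #S) * (X + 1) ^ #S *
        (X ^ 2 - C ((#S : K) - 1) * X - C ((#S : K) * ((Fintype.card ι : K) - #S))) := by
  rw [← charpoly_reindex (Equiv.sumCompl (· ∈ S)).symm, reindex_apply, Equiv.symm_symm,
    submatrix_sumCompl_thresholdMatrix, charpoly_completeSplitMatrix,
    Fintype.card_subtype_compl, Fintype.card_coe, Nat.cast_sub (card_le_univ S)]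

lemma roots_X_sq_sub_C_mul_X_sub_C {b c : ℝ} (h : 0 ≤ b ^ 2 + 4 * c) :
    (X ^ 2 - C b * X - C c).roots = {(b - √(b ^ 2 + 4 * c)) / 2, (b + √(b ^ 2 + 4 * c)) / 2} := by
  set r₁ := (b - √(b ^ 2 + 4 * c)) / 2
  set r₂ := (b + √(b ^ 2 + 4 * c)) / 2
  have hsum : r₁ + r₂ = b := by ring
  have hprod : r₁ * r₂ = -c := by linear_combination (-1 / 4 : ℝ) * Real.sq_sqrt h
  have hfactor : X ^ 2 - C b * X - C c = (X - C r₁) * (X - C r₂) := by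
    rw [← hsum, ← neg_neg c, ← hprod, C_neg, C_add, C_mul]
    ring
  rw [hfactor, roots_mul (mul_ne_zero (X_sub_C_ne_zero _) (X_sub_C_ne_zero _)), roots_X_sub_C,
    roots_X_sub_C]
  rfl

/-- The summands `{0}` and `{-1}` on the left keep the identity true for `S = ∅` and `S = univ`,
where the multiplicity `#S - 1` of `-1`, resp. `card ι - #S - 1` of `0`, would be `-1`. -/
lemma roots_thresholdMatrix (S : Finset ι) :
    {0} + {-1} + (thresholdMatrix S : Matrix ι ι ℝ).charpoly.roots =
      (Fintype.card ι - #S) • {0} + #S • {-1} +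
        {(((#S : ℝ) - 1) - √(((#S : ℝ) - 1) ^ 2 + 4 * #S * ((Fintype.card ι : ℝ) - #S))) / 2,
          (((#S : ℝ) - 1) + √(((#S : ℝ) - 1) ^ 2 + 4 * #S * ((Fintype.card ι : ℝ) - #S))) / 2} := by
  have hS : (#S : ℝ) ≤ Fintype.card ι := by exact_mod_cast card_le_univ S
  have hdisc : 0 ≤ ((#S : ℝ) - 1) ^ 2 + 4 * (#S * ((Fintype.card ι : ℝ) - #S)) := by
    have := sub_nonneg.2 hS
    positivity
  have h := charpoly_thresholdMatrix (K := ℝ) S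
  have hL : X * (X + 1) * (thresholdMatrix S : Matrix ι ι ℝ).charpoly ≠ 0 :=
    ((monic_X.mul (monic_X_add_C 1)).mul (charpoly_monic _)).ne_zero
  have hR := h ▸ hL
  rw [← C_1] at h hL hR
  have := congrArg roots h
  rw [roots_mul hL, roots_mul (left_ne_zero_of_mul hL), roots_mul hR,
    roots_mul (left_ne_zero_of_mul hR), roots_pow, roots_pow, roots_X, roots_X_add_C,
    roots_X_sq_sub_C_mul_X_sub_C hdisc] at this
  rw [this, ← mul_assoc]

end Threshold

lemma isFiniteMeasure_sum_map_dirac {α : Type*} [MeasurableSpace α] (s : Multiset α) :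
    IsFiniteMeasure (s.map Measure.dirac).sum := by
  induction s using Multiset.induction_on with
  | empty => simp only [Multiset.map_zero, Multiset.sum_zero]; infer_instance
  | cons a s ih => rw [Multiset.map_cons, Multiset.sum_cons]; infer_instance

lemma toReal_sum_map_dirac_apply {α : Type*} [MeasurableSpace α] (s : Multiset α) (B : Set α) :
    ((s.map Measure.dirac).sum B).toReal = (s.map fun x => (Measure.dirac x B).toReal).sum := by
  induction s using Multiset.induction_on with
  | empty => simp
  | cons a s ih =>
    have := isFiniteMeasure_sum_map_dirac s
    rw [Multiset.map_cons, Multiset.sum_cons, Measure.add_apply,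
      ENNReal.toReal_add (measure_ne_top _ _) (measure_ne_top _ _), ih]
    simp

lemma toReal_esd_apply {n : ℕ} (A : Matrix (Fin n) (Fin n) ℝ) (B : Set ℝ) :
    (esd A B).toReal = (A.charpoly.roots.map fun x => (Measure.dirac x B).toReal).sum / n := by
  rw [esd, Measure.smul_apply, smul_eq_mul, ENNReal.toReal_mul, toReal_sum_map_dirac_apply,
    ENNReal.toReal_inv, ENNReal.toReal_natCast, inv_mul_eq_div]

/-- The mass that `δ_{λ₋(k)} + δ_{λ₊(k)}` gives to `B`; `λ±(k)` are the eigenvalues of the quotient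
matrix `!![k - 1, n - k; k, 0]` of the threshold matrix with `k` ones along the partition
`S, Sᶜ`. -/
noncomputable def quotientEigenvalueMass (n k : ℕ) (B : Set ℝ) : ℝ :=
  (Measure.dirac ((((k : ℝ) - 1) - √(((k : ℝ) - 1) ^ 2 + 4 * k * ((n : ℝ) - k))) / 2) B).toReal
    + (Measure.dirac ((((k : ℝ) - 1) + √(((k : ℝ) - 1) ^ 2 + 4 * k * ((n : ℝ) - k))) / 2) B).toReal

lemma toReal_esd_thresholdMatrix {n : ℕ} (S : Finset (Fin n)) (B : Set ℝ) :
    (esd (thresholdMatrix S) B).toReal =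
      (((#S : ℝ) - 1) * (Measure.dirac (-1 : ℝ) B).toReal
        + ((n : ℝ) - #S - 1) * (Measure.dirac (0 : ℝ) B).toReal
        + quotientEigenvalueMass n #S B) / n := by
  have hS : #S ≤ n := by simpa using card_le_univ S
  have h := congrArg (fun s : Multiset ℝ => (s.map fun x => (Measure.dirac x B).toReal).sum)
    (roots_thresholdMatrix S)
  simp only [Multiset.map_add, Multiset.sum_add, Multiset.map_nsmul, Multiset.sum_nsmul,
    Multiset.map_singleton, Multiset.sum_singleton, Multiset.insert_eq_cons, Multiset.map_cons,
    Multiset.sum_cons, nsmul_eq_mul, Fintype.card_fin, Nat.cast_sub hS] at h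
  rw [toReal_esd_apply, quotientEigenvalueMass]
  congr 1
  linarith

lemma sum_range_mul_choose_mul_pow_mul_pow {R : Type*} [CommSemiring R] (x y : R) (n : ℕ) :
    ∑ k ∈ range (n + 1), k * (n.choose k * x ^ k * y ^ (n - k)) = n * x * (x + y) ^ (n - 1) := by
  cases n with
  | zero => simp
  | succ m =>
    rw [sum_range_succ', Nat.add_sub_cancel, add_pow, mul_sum]
    simp only [Nat.cast_zero, zero_mul, add_zero]
    refine sum_congr rfl fun k _ => ?_
    have hchoose : ((k + 1 : ℕ) : R) * (m + 1).choose (k + 1) = (m + 1 : ℕ) * m.choose k := by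
      rw [mul_comm, ← Nat.cast_mul, ← Nat.cast_mul, Nat.add_one_mul_choose_eq]
    rw [Nat.add_sub_add_right, pow_succ, ← mul_assoc, ← mul_assoc, hchoose]
    ring

lemma sum_binomial_mul_affine_add {n : ℕ} (hn : n ≠ 0) (p a b : ℝ) (e : ℕ → ℝ) :
    ∑ k ∈ range (n + 1), n.choose k * p ^ k * (1 - p) ^ (n - k) *
        ((((k : ℝ) - 1) * a + ((n : ℝ) - k - 1) * b + e k) / n) =
      (p - 1 / n) * a + (1 - p - 1 / n) * b +
        1 / n * ∑ k ∈ range (n + 1), n.choose k * p ^ k * (1 - p) ^ (n - k) * e k := by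
  set w : ℕ → ℝ := fun k => n.choose k * p ^ k * (1 - p) ^ (n - k)
  have hw : ∑ k ∈ range (n + 1), w k = 1 := calc
    _ = (p + (1 - p)) ^ n := by rw [add_pow]; exact sum_congr rfl fun k _ => by ring
    _ = 1 := by rw [add_sub_cancel, one_pow]
  have hmean : ∑ k ∈ range (n + 1), k * w k = n * p := by
    simpa using sum_range_mul_choose_mul_pow_mul_pow p (1 - p) n
  have hsplit : ∀ k ∈ range (n + 1), w k * ((((k : ℝ) - 1) * a + ((n : ℝ) - k - 1) * b + e k) / n)
      = (a - b) / n * (k * w k) + (b - (a + b) / n) * w k + 1 / n * (w k * e k) := fun k _ => by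
    field_simp
    ring
  rw [sum_congr rfl hsplit, sum_add_distrib, sum_add_distrib, ← mul_sum, ← mul_sum, ← mul_sum,
    hmean, hw]
  field_simp
  ring

section IndependentEvents

variable {Ω ι β : Type*} [MeasurableSpace Ω] {μ : Measure Ω}
  [Fintype ι] [MeasurableSpace β] {X : ι → Ω → β} {P : β → Prop} [DecidablePred P] {a b : ENNReal}

lemma measure_filter_eq_pow_mul_pow (hind : iIndepFun X μ) (hP : MeasurableSet {x | P x})
    (ha : ∀ i, μ {ω | P (X i ω)} = a) (hb : ∀ i, μ {ω | ¬ P (X i ω)} = b) (T : Finset ι) :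
    μ {ω | univ.filter (fun i => P (X i ω)) = T} = a ^ #T * b ^ (Fintype.card ι - #T) := by
  classical
  have hset : {ω | univ.filter (fun i => P (X i ω)) = T} =
      ⋂ i, X i ⁻¹' (if i ∈ T then {x | P x} else {x | P x}ᶜ) := by
    ext ω
    simp only [Set.mem_ofPred_eq, Set.mem_iInter, Set.mem_preimage, Finset.ext_iff, mem_filter,
      mem_univ, true_and]
    refine forall_congr' fun i => ?_
    split_ifs with hi <;> simp [hi]
  rw [hset, hind.meas_iInter fun i => ⟨_, by split_ifs; exacts [hP, hP.compl], rfl⟩]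
  have hfactor : ∀ i, μ (X i ⁻¹' (if i ∈ T then {x | P x} else {x | P x}ᶜ)) =
      if i ∈ T then a else b := fun i => by
    split_ifs
    exacts [ha i, hb i]
  rw [Fintype.prod_congr _ _ hfactor, prod_ite, prod_const, prod_const, filter_univ_mem,
    filter_not, filter_univ_mem, card_sdiff_of_subset (subset_univ T), card_univ]

lemma integral_comp_card_filter [IsProbabilityMeasure μ] (hX : ∀ i, Measurable (X i))
    (hind : iIndepFun X μ) (hP : MeasurableSet {x | P x})
    (ha : ∀ i, μ {ω | P (X i ω)} = a) (hb : ∀ i, μ {ω | ¬ P (X i ω)} = b) (f : ℕ → ℝ) :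
    ∫ ω, f #(univ.filter fun i => P (X i ω)) ∂μ =
      ∑ k ∈ range (Fintype.card ι + 1),
        (Fintype.card ι).choose k * a.toReal ^ k * b.toReal ^ (Fintype.card ι - k) * f k := by
  have hS : Measurable fun ω => univ.filter fun i => P (X i ω) :=
    measurable_finset_iff.2 fun i => by simpa using measurableSet_setOfPred.1 (hX i hP)
  rw [← integral_map (f := fun T : Finset ι => f #T) hS.aemeasurable
      (measurable_of_countable _).aestronglyMeasurable,
    integral_fintype .of_finite]
  simp only [map_measureReal_apply hS (measurableSet_singleton _), measureReal_def,
    Set.preimage, Set.mem_singleton_iff, measure_filter_eq_pow_mul_pow hind hP ha hb,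
    ENNReal.toReal_mul, ENNReal.toReal_pow, smul_eq_mul]
  rw [← powerset_univ,
    sum_powerset_apply_card fun k => a.toReal ^ k * b.toReal ^ (Fintype.card ι - k) * f k,
    card_univ]
  refine sum_congr rfl fun k _ => ?_
  rw [nsmul_eq_mul]
  ring

end IndependentEvents

/-- the mean spectral distribution of the binary threshold model `G_n(p)`
(i.i.d. Bernoulli(p) hidden variables `X_1, …, X_n`, vertices `i ≠ j` adjacent iff
`X_i + X_j ≥ 1`) is, on every Borel set `B`,
`(p - 1/n)·δ_{-1}(B) + (1 - p - 1/n)·δ_0(B)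
  + (1/n)·Σ_{k=0}^n binom(n,k) p^k (1-p)^{n-k} (δ_{λ₋(k)}(B) + δ_{λ₊(k)}(B))`
where `λ±(k) = ((k-1) ± √((k-1)² + 4k(n-k)))/2`. -/
theorem binaryThresholdModel_mean_esd
    {Ω : Type*} [MeasureSpace Ω] [IsProbabilityMeasure (ℙ : Measure Ω)]
    (p : ℝ) (hp0 : 0 < p) (hp1 : p < 1) (n : ℕ) (hn : 2 ≤ n)
    (X : Fin n → Ω → ℕ)
    (hmeas : ∀ i, Measurable (X i))
    (hindep : iIndepFun X ℙ)
    (hdist : ∀ i, ℙ {ω | X i ω = 1} = ENNReal.ofReal p ∧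
                  ℙ {ω | X i ω = 0} = ENNReal.ofReal (1 - p)) :
    ∀ B : Set ℝ, MeasurableSet B →
      (∫ ω, ((esd (Matrix.of fun i j : Fin n =>
          if i ≠ j ∧ 1 ≤ X i ω + X j ω then (1 : ℝ) else 0)) B).toReal ∂ℙ) =
        (p - 1 / n) * ((Measure.dirac (-1 : ℝ)) B).toReal
        + (1 - p - 1 / n) * ((Measure.dirac (0 : ℝ)) B).toReal
        + (1 / n) * ∑ k ∈ Finset.range (n + 1),
            (n.choose k : ℝ) * p ^ k * (1 - p) ^ (n - k) *
              (((Measure.dirac ((((k : ℝ) - 1) -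
                  Real.sqrt (((k : ℝ) - 1) ^ 2 + 4 * k * ((n : ℝ) - k))) / 2)) B).toReal
               + ((Measure.dirac ((((k : ℝ) - 1) +
                  Real.sqrt (((k : ℝ) - 1) ^ 2 + 4 * k * ((n : ℝ) - k))) / 2)) B).toReal) := by
  intro B _
  have hP : MeasurableSet {v : ℕ | 1 ≤ v} := .of_discrete
  have hzero : ∀ i, ℙ {ω | ¬ 1 ≤ X i ω} = ENNReal.ofReal (1 - p) := fun i => by
    simpa [Nat.lt_one_iff] using (hdist i).2
  have hpos : ∀ i, ℙ {ω | 1 ≤ X i ω} = ENNReal.ofReal p := fun i => by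
    rw [← compl_compl {ω | 1 ≤ X i ω}, Set.compl_ofPred,
      prob_compl_eq_one_sub (s := {ω | ¬ 1 ≤ X i ω}) (hmeas i hP.compl), hzero,
      ← ENNReal.ofReal_one, ← ENNReal.ofReal_sub _ (by linarith), sub_sub_cancel]
  have hmatrix : ∀ ω, (Matrix.of fun i j : Fin n =>
      if i ≠ j ∧ 1 ≤ X i ω + X j ω then (1 : ℝ) else 0) =
        thresholdMatrix (univ.filter fun i => 1 ≤ X i ω) := fun ω => by
    ext i j
    simp only [thresholdMatrix, Matrix.of_apply, mem_filter, mem_univ, true_and]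
    exact if_congr (and_congr_right fun _ => by omega) rfl rfl
  simp_rw [hmatrix, toReal_esd_thresholdMatrix]
  rw [integral_comp_card_filter hmeas hindep hP hpos hzero (fun k => (((k : ℝ) - 1) * _
      + ((n : ℝ) - k - 1) * _ + quotientEigenvalueMass n k B) / n), Fintype.card_fin,
    ENNReal.toReal_ofReal hp0.le, ENNReal.toReal_ofReal (by linarith)]
  exact sum_binomial_mul_affine_add (by omega) p _ _ _
end
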